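/- Let A be an alphabet, a ∈ A a distinguished letter, and k ≥ 1. Let w₁ = w₁'·a and w₂ = w₂'·a be finite words of length k each, such that the letter a does not occur in w₁' and does not occur in w₂', and w₁ ≠ w₂. Then the concatenation w₁·w₂ is not a prefix of any infinite word representable by a lasso of length k; that is, there is no lasso (u,v) of length k with w₁·w₂ < u·v^ω. -/

import Mathlib

/-- The ultimately periodic word `u · v^ω` induced by the lasso `(u, v)`. -/
def lassoWord {A : Type*} (u v : List A) (hv : v ≠ []) : ℕ → A :=
  fun n =>
    if h : n < u.length then u[n]
    else v[(n - u.length) % v.length]'(Nat.mod_lt _ (List.length_pos_iff.mpr hv))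

/-- The finite word `w` is a prefix of the infinite word `σ`. -/
def IsPrefixOf {A : Type*} (w : List A) (σ : ℕ → A) : Prop :=
  ∀ (i : ℕ) (h : i < w.length), w[i] = σ i

/-
Let `σ = u·v^ω` with `|u| + |v| = k` and `m = |v|`. As `w₁` ends in `a`, `σ (k - 1) = a`, and
`k - 1 ≥ |u|` lies in the periodic part. If `m < k`, then `σ (k - 1 + m) = a` as well, but this
position falls inside `w₂'`, which avoids `a`. If `m = k`, then `u` is empty, `σ` has period `k`
from the start, and `w₁`, `w₂` are both the first `k` letters of `σ`, so `w₁ = w₂`.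
-/

section LassoWord

variable {A : Type*}

lemma lassoWord_add_length (u v : List A) (hv : v ≠ []) {n : ℕ} (hn : u.length ≤ n) :
    lassoWord u v hv (n + v.length) = lassoWord u v hv n := by
  unfold lassoWord
  rw [dif_neg (by omega), dif_neg (by omega)]
  congr 1
  rw [show n + v.length - u.length = n - u.length + v.length by omega, Nat.add_mod_right]

lemma lassoWord_nil_shift_length (v : List A) (hv : v ≠ []) :
    (fun i => lassoWord [] v hv (v.length + i)) = lassoWord [] v hv := by
  funext i
  rw [add_comm]
  exact lassoWord_add_length [] v hv (Nat.zero_le i)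

end LassoWord

namespace IsPrefixOf

variable {A : Type*} {σ : ℕ → A}

lemma append {w₁ w₂ : List A} (h : IsPrefixOf (w₁ ++ w₂) σ) :
    IsPrefixOf w₁ σ ∧ IsPrefixOf w₂ (fun i => σ (w₁.length + i)) := by
  refine ⟨fun i hi => ?_, fun i hi => ?_⟩
  · rw [← h i (by rw [List.length_append]; omega), List.getElem_append_left hi]
  · show w₂[i] = σ (w₁.length + i)
    rw [← h (w₁.length + i) (by rw [List.length_append]; omega),
      List.getElem_append_right (by omega)]
    simp

lemma apply_mem {w : List A} (h : IsPrefixOf w σ) {i : ℕ} (hi : i < w.length) : σ i ∈ w :=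
  h i hi ▸ List.getElem_mem hi

lemma apply_length_of_append_singleton {w : List A} {a : A} (h : IsPrefixOf (w ++ [a]) σ) :
    σ w.length = a := by
  simpa using (h w.length (by simp)).symm

lemma eq_of_length_eq {w w' : List A} (h : IsPrefixOf w σ) (h' : IsPrefixOf w' σ)
    (hlen : w.length = w'.length) : w = w' :=
  List.ext_getElem hlen fun i hi hi' => (h i hi).trans (h' i hi').symm

end IsPrefixOf

theorem stmt8_general {A : Type*} (a : A) (k : ℕ) (w₁' w₂' : List A)
    (hlen₁ : (w₁' ++ [a]).length = k) (hlen₂ : (w₂' ++ [a]).length = k)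
    (ha₂ : a ∉ w₂') (hne : w₁' ++ [a] ≠ w₂' ++ [a]) :
    ¬ ∃ (u v : List A) (hv : v ≠ []),
        u.length + v.length = k ∧
        IsPrefixOf ((w₁' ++ [a]) ++ (w₂' ++ [a])) (lassoWord u v hv) := by
  rintro ⟨u, v, hv, hlen, hpre⟩
  obtain ⟨h₁, h₂⟩ := hpre.append
  rw [hlen₁] at h₂
  have hv_pos : 0 < v.length := List.length_pos_iff.mpr hv
  simp only [List.length_append, List.length_singleton] at hlen₁ hlen₂
  rcases Nat.lt_or_ge v.length k with hvk | hvk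
  · have hσa : lassoWord u v hv (w₁'.length + v.length) = a := by
      rw [lassoWord_add_length u v hv (by omega), h₁.apply_length_of_append_singleton]
    have hmem := h₂.append.1.apply_mem (i := v.length - 1) (by omega)
    rw [show k + (v.length - 1) = w₁'.length + v.length by omega, hσa] at hmem
    exact ha₂ hmem
  · obtain rfl : u = [] := List.eq_nil_of_length_eq_zero (by omega)
    rw [← hlen, List.length_nil, zero_add, lassoWord_nil_shift_length] at h₂
    refine hne (h₁.eq_of_length_eq h₂ ?_)
    simp only [List.length_append, List.length_singleton]
    omega

theorem stmt8 {A : Type*} (a : A) (k : ℕ) (hk : 1 ≤ k) (w₁' w₂' : List A)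
    (hlen₁ : (w₁' ++ [a]).length = k) (hlen₂ : (w₂' ++ [a]).length = k)
    (ha₁ : a ∉ w₁') (ha₂ : a ∉ w₂') (hne : w₁' ++ [a] ≠ w₂' ++ [a]) :
    ¬ ∃ (u v : List A) (hv : v ≠ []),
        u.length + v.length = k ∧
        IsPrefixOf ((w₁' ++ [a]) ++ (w₂' ++ [a])) (lassoWord u v hv) :=
  stmt8_general a k w₁' w₂' hlen₁ hlen₂ ha₂ hne
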